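/- arXiv:2108.03844 — 2 statements merged into one kernel-verified Lean document; each statement's English description precedes it below -/
import Mathlib

section
/- Assume in addition that every element of X is essentially bounded. Then for each η > 0 there exists a constant C, depending only on X and η, such that for all ρ₁, ρ₂ ∈ L^∞(D, μ) with ρ₁ ≥ η and ρ₂ ≥ η almost everywhere, ‖M[ρ₁]^{-1} − M[ρ₂]^{-1}‖_{L(X,X)} ≤ C ‖ρ₁ − ρ₂‖_{L¹(D,μ)}. -/
open MeasureTheory
open scoped RealInnerProductSpace ENNReal

/-!
Write `M[ρ]⁻¹ - M[ρ']⁻¹ = M[ρ]⁻¹ (M[ρ'] - M[ρ]) M[ρ']⁻¹`. Coercivity bounds both inverses by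
`η⁻¹`. Since `X` is finite-dimensional, its inclusion into `L^∞` is bounded, i.e.
`‖v‖_∞ ≤ K ‖v‖_{L²}` on `X`, so `|⟪(M[ρ] - M[ρ']) v, w⟫| = |∫ (ρ - ρ') (v · w)|` is at most
`K² ‖v‖ ‖w‖ ‖ρ - ρ'‖_{L¹}`.
-/

theorem ContinuousLinearEquiv.norm_symm_sub_symm_le {𝕜 E F : Type*} [NontriviallyNormedField 𝕜]
    [NormedAddCommGroup E] [NormedSpace 𝕜 E] [NormedAddCommGroup F] [NormedSpace 𝕜 F]
    (A B : E ≃L[𝕜] F) :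
    ‖(A.symm : F →L[𝕜] E) - B.symm‖
      ≤ ‖(A.symm : F →L[𝕜] E)‖ * ‖(A : E →L[𝕜] F) - (B : E →L[𝕜] F)‖ * ‖(B.symm : F →L[𝕜] E)‖ := by
  have hresolvent : (A.symm : F →L[𝕜] E) - B.symm
      = (A.symm : F →L[𝕜] E) ∘L ((B : E →L[𝕜] F) - (A : E →L[𝕜] F)) ∘L (B.symm : F →L[𝕜] E) := by
    ext u
    simp
  rw [hresolvent, norm_sub_rev (A : E →L[𝕜] F)]
  exact (ContinuousLinearMap.opNorm_comp_le _ _).trans <| by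
    rw [mul_assoc]
    gcongr
    exact ContinuousLinearMap.opNorm_comp_le _ _

theorem ContinuousLinearEquiv.norm_symm_le_of_coercive {F : Type*} [NormedAddCommGroup F]
    [InnerProductSpace ℝ F] (T : F ≃L[ℝ] F) {η : ℝ} (hη : 0 < η)
    (hT : ∀ v, η * ‖v‖ ^ 2 ≤ ⟪T v, v⟫) :
    ‖(T.symm : F →L[ℝ] F)‖ ≤ η⁻¹ := by
  refine ContinuousLinearMap.opNorm_le_bound _ (inv_nonneg.mpr hη.le) fun u => ?_
  set v := T.symm u
  have hv : η * ‖v‖ ^ 2 ≤ ‖u‖ * ‖v‖ := by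
    calc η * ‖v‖ ^ 2 ≤ ⟪T v, v⟫ := hT v
      _ ≤ ‖T v‖ * ‖v‖ := real_inner_le_norm _ _
      _ = ‖u‖ * ‖v‖ := by rw [T.apply_symm_apply]
  show ‖v‖ ≤ η⁻¹ * ‖u‖
  rw [inv_mul_eq_div, le_div_iff₀ hη]
  rcases (norm_nonneg v).eq_or_lt with hv0 | hv0
  · rw [← hv0, zero_mul]
    exact norm_nonneg u
  · nlinarith

section LpTop

variable {D : Type*} [MeasurableSpace D] {μ : Measure D}
  {E : Type*} [NormedAddCommGroup E] [NormedSpace ℝ E] {p : ℝ≥0∞} [Fact (1 ≤ p)]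

noncomputable def Submodule.toLpTop (X : Submodule ℝ (Lp E p μ))
    (hX : ∀ v : X, MemLp ((v : Lp E p μ) : D → E) ∞ μ) : X →ₗ[ℝ] Lp E ∞ μ where
  toFun v := (hX v).toLp _
  map_add' v w := by
    rw [← MemLp.toLp_add]
    exact MemLp.toLp_congr _ _ (Lp.coeFn_add _ _)
  map_smul' c v := by
    rw [RingHom.id_apply, ← MemLp.toLp_const_smul]
    exact MemLp.toLp_congr _ _ (Lp.coeFn_smul _ _)

theorem Submodule.exists_ae_norm_le_mul_norm (X : Submodule ℝ (Lp E p μ))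
    [FiniteDimensional ℝ X] (hX : ∀ v : X, MemLp ((v : Lp E p μ) : D → E) ∞ μ) :
    ∃ K : ℝ, ∀ v : X, ∀ᵐ x ∂μ, ‖(v : Lp E p μ) x‖ ≤ K * ‖v‖ := by
  let T := (X.toLpTop hX).toContinuousLinearMap
  refine ⟨‖T‖, fun v => ?_⟩
  filter_upwards [ae_le_lpNorm_exponent_top (hX v)] with x hx
  calc ‖(v : Lp E p μ) x‖ ≤ lpNorm (v : Lp E p μ) ∞ μ := hx
    _ = ‖T v‖ := by
        rw [← toReal_eLpNorm (hX v).aestronglyMeasurable]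
        exact (Lp.norm_toLp _ (hX v)).symm
    _ ≤ ‖T‖ * ‖v‖ := T.le_opNorm v

end LpTop

section WeightedMass

variable {D : Type*} [MeasurableSpace D] {μ : Measure D}
  {E : Type*} [NormedAddCommGroup E] [InnerProductSpace ℝ E]

theorem abs_integral_mul_inner_le {f : D → ℝ} (hf : Integrable f μ) {v w : D → E} {a b : ℝ}
    (hv : ∀ᵐ x ∂μ, ‖v x‖ ≤ a) (hw : ∀ᵐ x ∂μ, ‖w x‖ ≤ b) :
    |∫ x, f x * ⟪v x, w x⟫ ∂μ| ≤ a * b * ∫ x, |f x| ∂μ := by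
  rw [← integral_const_mul, ← Real.norm_eq_abs]
  refine norm_integral_le_of_norm_le (hf.abs.const_mul _) ?_
  filter_upwards [hv, hw] with x hvx hwx
  calc ‖f x * ⟪v x, w x⟫‖ = |f x| * |⟪v x, w x⟫| := by
        rw [norm_mul, Real.norm_eq_abs, Real.norm_eq_abs]
    _ ≤ |f x| * (‖v x‖ * ‖w x‖) := by gcongr; exact abs_real_inner_le_norm _ _
    _ ≤ |f x| * (a * b) := by gcongr; exact (norm_nonneg _).trans hvx
    _ = a * b * |f x| := mul_comm _ _

theorem integrable_mul_inner {ρ : D → ℝ} (hρ : MemLp ρ ∞ μ) (v w : Lp E 2 μ) :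
    Integrable (fun x => ρ x * ⟪v x, w x⟫) μ :=
  (L2.integrable_inner v w).bdd_mul hρ.aestronglyMeasurable (ae_le_lpNorm_exponent_top hρ)

/-- `M = M[ρ]`, the operator representing the `ρ`-weighted `L²` form on `X`. -/
def IsWeightedMass (X : Submodule ℝ (Lp E 2 μ)) (ρ : D → ℝ) (M : X → X) : Prop :=
  ∀ v w : X, ⟪((M v : X) : Lp E 2 μ), (w : Lp E 2 μ)⟫
    = ∫ x, ρ x * ⟪(v : Lp E 2 μ) x, (w : Lp E 2 μ) x⟫ ∂μ

variable {X : Submodule ℝ (Lp E 2 μ)}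

theorem IsWeightedMass.norm_symm_le {ρ : D → ℝ} {M : X ≃L[ℝ] X} (hM : IsWeightedMass X ρ M)
    (hρ : MemLp ρ ∞ μ) {η : ℝ} (hη : 0 < η) (hρη : ∀ᵐ x ∂μ, η ≤ ρ x) :
    ‖(M.symm : X →L[ℝ] X)‖ ≤ η⁻¹ := by
  refine M.norm_symm_le_of_coercive hη fun v => ?_
  calc η * ‖v‖ ^ 2 = ∫ x, η * ⟪(v : Lp E 2 μ) x, (v : Lp E 2 μ) x⟫ ∂μ := by
        rw [integral_const_mul, ← L2.inner_def, real_inner_self_eq_norm_sq]; rfl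
    _ ≤ ∫ x, ρ x * ⟪(v : Lp E 2 μ) x, (v : Lp E 2 μ) x⟫ ∂μ := by
        refine integral_mono_ae ((L2.integrable_inner _ _).const_mul η)
          (integrable_mul_inner hρ _ _) ?_
        filter_upwards [hρη] with x hx
        exact mul_le_mul_of_nonneg_right hx real_inner_self_nonneg
    _ = ⟪M v, v⟫ := (hM v v).symm

theorem IsWeightedMass.norm_sub_le {ρ₁ ρ₂ : D → ℝ} {M₁ M₂ : X →L[ℝ] X}
    (h₁ : IsWeightedMass X ρ₁ M₁) (h₂ : IsWeightedMass X ρ₂ M₂) (hρ₁ : MemLp ρ₁ ∞ μ)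
    (hρ₂ : MemLp ρ₂ ∞ μ) (hρ : Integrable (fun x => ρ₁ x - ρ₂ x) μ) {K : ℝ}
    (hK : ∀ v : X, ∀ᵐ x ∂μ, ‖(v : Lp E 2 μ) x‖ ≤ K * ‖v‖) :
    ‖M₁ - M₂‖ ≤ K ^ 2 * ∫ x, |ρ₁ x - ρ₂ x| ∂μ := by
  refine ContinuousLinearMap.opNorm_le_of_re_inner_le (by positivity) fun v w hv hw => ?_
  have hdiff : ⟪(M₁ - M₂) v, w⟫
      = ∫ x, (ρ₁ x - ρ₂ x) * ⟪(v : Lp E 2 μ) x, (w : Lp E 2 μ) x⟫ ∂μ := by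
    simp only [sub_apply, inner_sub_left, Submodule.coe_inner, h₁ v w, h₂ v w, sub_mul]
    exact (integral_sub (integrable_mul_inner hρ₁ _ _) (integrable_mul_inner hρ₂ _ _)).symm
  have hbound := abs_integral_mul_inner_le hρ (hK v) (hK w)
  rw [hv, hw, mul_one, ← sq, ← hdiff] at hbound
  rw [RCLike.re_to_real]
  exact (le_abs_self _).trans hbound

end WeightedMass

/-- Let `X` be a finite-dimensional subspace of `L²(D, μ; ℝ³)` whose elements
are all essentially bounded. Then for each `η > 0` there is a constant `C` (depending only on
`X` and `η`) such that for all `ρ₁, ρ₂ ∈ L^∞` with `ρ₁, ρ₂ ≥ η` a.e.,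
`‖M[ρ₁]⁻¹ − M[ρ₂]⁻¹‖_{L(X,X)} ≤ C ‖ρ₁ − ρ₂‖_{L¹(D,μ)}`, where `M[ρ] : X → X` is determined
by `⟪M[ρ]v, w⟫_{L²} = ∫ ρ (v·w) dμ`. -/
theorem stmt_3 {D : Type*} [MeasurableSpace D] (μ : Measure D) [IsFiniteMeasure μ]
    (X : Submodule ℝ (Lp (EuclideanSpace ℝ (Fin 3)) 2 μ)) [FiniteDimensional ℝ X]
    (hX_bdd : ∀ v : X, MemLp (((v : X) : Lp (EuclideanSpace ℝ (Fin 3)) 2 μ) : D → EuclideanSpace ℝ (Fin 3)) ⊤ μ)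
    (η : ℝ) (hη : 0 < η) :
    ∃ C : ℝ, ∀ ρ₁ ρ₂ : D → ℝ,
      Measurable ρ₁ → Measurable ρ₂ → MemLp ρ₁ ⊤ μ → MemLp ρ₂ ⊤ μ →
      (∀ᵐ x ∂μ, η ≤ ρ₁ x) → (∀ᵐ x ∂μ, η ≤ ρ₂ x) →
      ∀ M₁ M₂ : X ≃L[ℝ] X,
        (∀ v w : X,
          ⟪((M₁ v : X) : Lp (EuclideanSpace ℝ (Fin 3)) 2 μ),
              ((w : X) : Lp (EuclideanSpace ℝ (Fin 3)) 2 μ)⟫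
            = ∫ x, ρ₁ x * ⟪((v : X) : Lp (EuclideanSpace ℝ (Fin 3)) 2 μ) x,
                ((w : X) : Lp (EuclideanSpace ℝ (Fin 3)) 2 μ) x⟫ ∂μ) →
        (∀ v w : X,
          ⟪((M₂ v : X) : Lp (EuclideanSpace ℝ (Fin 3)) 2 μ),
              ((w : X) : Lp (EuclideanSpace ℝ (Fin 3)) 2 μ)⟫
            = ∫ x, ρ₂ x * ⟪((v : X) : Lp (EuclideanSpace ℝ (Fin 3)) 2 μ) x,
                ((w : X) : Lp (EuclideanSpace ℝ (Fin 3)) 2 μ) x⟫ ∂μ) →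
        ‖(M₁.symm : X →L[ℝ] X) - (M₂.symm : X →L[ℝ] X)‖
          ≤ C * ∫ x, |ρ₁ x - ρ₂ x| ∂μ := by
  obtain ⟨K, hK⟩ := X.exists_ae_norm_le_mul_norm hX_bdd
  refine ⟨η⁻¹ * K ^ 2 * η⁻¹, fun ρ₁ ρ₂ _ _ hρ₁ hρ₂ hρη₁ hρη₂ M₁ M₂ h₁ h₂ => ?_⟩
  have hM₁ : IsWeightedMass X ρ₁ M₁ := h₁
  have hM₂ : IsWeightedMass X ρ₂ M₂ := h₂
  have hsymm₁ : ‖(M₁.symm : X →L[ℝ] X)‖ ≤ η⁻¹ := hM₁.norm_symm_le hρ₁ hη hρη₁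
  have hsymm₂ : ‖(M₂.symm : X →L[ℝ] X)‖ ≤ η⁻¹ := hM₂.norm_symm_le hρ₂ hη hρη₂
  have hsub : ‖(M₁ : X →L[ℝ] X) - (M₂ : X →L[ℝ] X)‖ ≤ K ^ 2 * ∫ x, |ρ₁ x - ρ₂ x| ∂μ :=
    IsWeightedMass.norm_sub_le (M₁ := (M₁ : X →L[ℝ] X)) (M₂ := (M₂ : X →L[ℝ] X)) hM₁ hM₂
      hρ₁ hρ₂ ((hρ₁.sub hρ₂).integrable le_top) hK
  calc ‖(M₁.symm : X →L[ℝ] X) - (M₂.symm : X →L[ℝ] X)‖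
      ≤ ‖(M₁.symm : X →L[ℝ] X)‖ * ‖(M₁ : X →L[ℝ] X) - (M₂ : X →L[ℝ] X)‖
          * ‖(M₂.symm : X →L[ℝ] X)‖ := M₁.norm_symm_sub_symm_le M₂
    _ ≤ η⁻¹ * (K ^ 2 * ∫ x, |ρ₁ x - ρ₂ x| ∂μ) * η⁻¹ := by gcongr
    _ = η⁻¹ * K ^ 2 * η⁻¹ * ∫ x, |ρ₁ x - ρ₂ x| ∂μ := by ring
end

section
/- Let (β_t)_{t≥0} be a standard one-dimensional Brownian motion and let T > 0. There is a constant C depending only on T such that for every L > 0, P( there exists m ∈ ℕ with m ≥ 1 such that sup_{t₁,t₂ ∈ [0,T], |t₁ − t₂| ≤ m^{-6}} m·|β_{t₁} − β_{t₂}| > L ) ≤ C / L⁴. In particular this probability tends to 0 as L → ∞. -/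
/-!
Dyadic chaining, as in Kolmogorov's continuity theorem. Fix `m ≥ 1`, let `2 ^ j₀` be the
largest power of two not exceeding `m ^ 6` and `a = L / (19 m)`, and call a path good if every
dyadic increment of level `j₀ + i` inside `[0, T]` is at most `a (9/10) ^ i`. Between points at
distance `≤ m⁻⁶ ≤ 2 ^ (-j₀)` a good continuous path moves by at most `2 · 9a + a = L / m`.
By the Gaussian tail `P(|N(0, v)| ≥ ε) ≤ 16 v² / ε⁴`, the `⌈T⌉ 2 ^ (j₀ + i)` increments of level
`j₀ + i` fail with total probability `16 ⌈T⌉ 2 ^ (-j₀) a⁻⁴ (2 (9/10) ^ 4)⁻ⁱ`; as `2 (9/10) ^ 4 > 1`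
this sums over `i` to `O(⌈T⌉ m⁴ 2 ^ (-j₀) / L⁴) = O(⌈T⌉ / (m² L⁴))`, which is summable in `m`.
-/

open MeasureTheory
open scoped ENNReal

/-- A standard one-dimensional Brownian motion: `β 0 = 0` a.s., a.e. continuous paths on
`[0,∞)`, independent increments over any nonnegative monotone sequence of times, and Gaussian
increments `β t − β s ∼ N(0, t − s)` for `0 ≤ s ≤ t`. -/
def IsBrownianMotion {Ω : Type*} [MeasurableSpace Ω] (P : Measure Ω)
    (β : ℝ → Ω → ℝ) : Prop :=
  (∀ t : ℝ, Measurable (β t)) ∧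
  (∀ᵐ ω ∂P, β 0 ω = 0) ∧
  (∀ᵐ ω ∂P, ContinuousOn (fun t => β t ω) (Set.Ici 0)) ∧
  (∀ (n : ℕ) (t : Fin (n + 1) → ℝ), (∀ i, 0 ≤ t i) → Monotone t →
    ProbabilityTheory.iIndepFun
      (fun (i : Fin n) (ω : Ω) => β (t i.succ) ω - β (t i.castSucc) ω) P) ∧
  (∀ s t : ℝ, 0 ≤ s → s ≤ t →
    Measure.map (fun ω => β t ω - β s ω) P
      = ProbabilityTheory.gaussianReal 0 (Real.toNNReal (t - s)))

open ProbabilityTheory Real Filter Topology Finset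
open scoped NNReal

lemma hasSubgaussianMGF_id_gaussianReal (v : ℝ≥0) :
    HasSubgaussianMGF id v (gaussianReal 0 v) where
  integrable_exp_mul t := integrable_exp_mul_gaussianReal t
  mgf_le t := by simp [mgf_id_gaussianReal]

lemma ProbabilityTheory.HasSubgaussianMGF.measureReal_abs_ge_le {Ω : Type*} [MeasurableSpace Ω]
    {μ : Measure Ω} [IsFiniteMeasure μ] {X : Ω → ℝ} {c : ℝ≥0} (h : HasSubgaussianMGF X c μ) {ε : ℝ}
    (hε : 0 ≤ ε) :
    μ.real {ω | ε ≤ |X ω|} ≤ 2 * exp (-ε ^ 2 / (2 * c)) := by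
  have hsplit : {ω | ε ≤ |X ω|} = {ω | ε ≤ X ω} ∪ {ω | ε ≤ (-X) ω} := by
    ext ω; simp only [le_abs', Set.mem_union, Pi.neg_apply, le_neg]
    exact or_comm
  calc μ.real {ω | ε ≤ |X ω|} ≤ μ.real {ω | ε ≤ X ω} + μ.real {ω | ε ≤ (-X) ω} :=
        hsplit ▸ measureReal_union_le _ _
    _ ≤ exp (-ε ^ 2 / (2 * c)) + exp (-ε ^ 2 / (2 * c)) :=
        add_le_add (h.measure_ge_le hε) (h.neg.measure_ge_le hε)
    _ = 2 * exp (-ε ^ 2 / (2 * c)) := by ring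

lemma exp_neg_le_two_div_sq {x : ℝ} (hx : 0 < x) : exp (-x) ≤ 2 / x ^ 2 := by
  have h := Real.pow_div_factorial_le_exp x hx.le 2
  rw [exp_neg, inv_le_comm₀ (exp_pos x) (by positivity)]
  simpa [Nat.factorial] using h

lemma measure_abs_ge_le_of_map_eq_gaussianReal {Ω : Type*} [MeasurableSpace Ω] {μ : Measure Ω}
    [IsProbabilityMeasure μ] {X : Ω → ℝ} (hX : Measurable X) {v : ℝ≥0} (hv : 0 < v)
    (hmap : μ.map X = gaussianReal 0 v) {ε : ℝ} (hε : 0 < ε) :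
    μ {ω | ε ≤ |X ω|} ≤ ENNReal.ofReal (16 * v ^ 2 / ε ^ 4) := by
  have hX_sub : HasSubgaussianMGF X v μ :=
    (HasSubgaussianMGF.id_map_iff hX.aemeasurable).1 (hmap ▸ hasSubgaussianMGF_id_gaussianReal v)
  have hv' : (0 : ℝ) < v := hv
  rw [← ofReal_measureReal]
  refine ENNReal.ofReal_le_ofReal ((hX_sub.measureReal_abs_ge_le hε.le).trans ?_)
  calc 2 * exp (-ε ^ 2 / (2 * v)) = 2 * exp (-(ε ^ 2 / (2 * v))) := by rw [neg_div]
    _ ≤ 2 * (2 / (ε ^ 2 / (2 * v)) ^ 2) := by gcongr; exact exp_neg_le_two_div_sq (by positivity)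
    _ = 16 * v ^ 2 / ε ^ 4 := by field_simp; ring

noncomputable def dyadicFloor (n : ℕ) (t : ℝ) : ℝ := ⌊2 ^ n * t⌋₊ / 2 ^ n

lemma dyadicFloor_nonneg (n : ℕ) (t : ℝ) : 0 ≤ dyadicFloor n t := by
  unfold dyadicFloor; positivity

lemma dyadicFloor_le (n : ℕ) {t : ℝ} (ht : 0 ≤ t) : dyadicFloor n t ≤ t := by
  rw [dyadicFloor, div_le_iff₀ (by positivity), mul_comm]
  exact Nat.floor_le (by positivity)

lemma sub_inv_two_pow_lt_dyadicFloor (n : ℕ) (t : ℝ) : t - (2 ^ n)⁻¹ < dyadicFloor n t := by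
  rw [dyadicFloor, lt_div_iff₀ (by positivity), sub_mul, inv_mul_cancel₀ (by positivity),
    mul_comm, sub_lt_iff_lt_add]
  exact Nat.lt_floor_add_one _

lemma tendsto_dyadicFloor {t : ℝ} (ht : 0 ≤ t) :
    Tendsto (fun n ↦ dyadicFloor n t) atTop (𝓝[Set.Ici 0] t) := by
  refine tendsto_nhdsWithin_iff.2 ⟨?_, .of_forall fun n ↦ dyadicFloor_nonneg n t⟩
  have hlow : Tendsto (fun n : ℕ ↦ t - ((2 : ℝ) ^ n)⁻¹) atTop (𝓝 t) := by
    simpa using tendsto_const_nhds.sub (tendsto_inv_atTop_zero.comp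
      (tendsto_pow_atTop_atTop_of_one_lt (one_lt_two : (1 : ℝ) < 2)))
  exact tendsto_of_tendsto_of_tendsto_of_le_of_le hlow tendsto_const_nhds
    (fun n ↦ (sub_inv_two_pow_lt_dyadicFloor n t).le) (fun n ↦ dyadicFloor_le n ht)

lemma dyadicFloor_succ (n : ℕ) (t : ℝ) :
    dyadicFloor (n + 1) t = dyadicFloor n t ∨ ∃ k : ℕ,
      dyadicFloor n t = k / 2 ^ (n + 1) ∧ dyadicFloor (n + 1) t = (k + 1) / 2 ^ (n + 1) := by
  obtain ⟨q, hq⟩ : ∃ q, ⌊2 ^ (n + 1) * t⌋₊ = q := ⟨_, rfl⟩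
  have hhalf : ⌊2 ^ n * t⌋₊ = q / 2 := by
    rw [← hq, ← Nat.floor_div_ofNat]; congr 1; ring
  have hn : dyadicFloor n t = (q / 2 : ℕ) * 2 / 2 ^ (n + 1) := by
    rw [dyadicFloor, hhalf, pow_succ]; field_simp
  have hsucc : dyadicFloor (n + 1) t = (q : ℝ) / 2 ^ (n + 1) := by rw [dyadicFloor, hq]
  rcases Nat.even_or_odd' q with ⟨k, hk | hk⟩
  · left
    rw [hn, hsucc, show q / 2 = k by omega, hk]
    push_cast; ring
  · right
    refine ⟨2 * k, ?_, ?_⟩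
    · rw [hn, show q / 2 = k by omega]; push_cast; ring
    · rw [hsucc, hk]; push_cast; ring

def DyadicIncrementsLE (f : ℝ → ℝ) (T : ℝ) (j₀ : ℕ) (c : ℕ → ℝ) : Prop :=
  ∀ i k : ℕ, ((k : ℝ) + 1) / 2 ^ (j₀ + i) ≤ T →
    |f (((k : ℝ) + 1) / 2 ^ (j₀ + i)) - f (k / 2 ^ (j₀ + i))| ≤ c i

section Chaining

variable {f : ℝ → ℝ} {T : ℝ} {j₀ : ℕ} {c : ℕ → ℝ}

lemma DyadicIncrementsLE.abs_sub_dyadicFloor_succ_le (hinc : DyadicIncrementsLE f T j₀ c)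
    (hc : 0 ≤ c) {t : ℝ} (ht : t ∈ Set.Icc 0 T) (n : ℕ) :
    |f (dyadicFloor (j₀ + (n + 1)) t) - f (dyadicFloor (j₀ + n) t)| ≤ c (n + 1) := by
  rcases dyadicFloor_succ (j₀ + n) t with heq | ⟨k, hk, hk'⟩
  · rw [← add_assoc, heq, sub_self, abs_zero]; exact hc _
  · rw [← add_assoc, hk, hk']
    exact hinc (n + 1) k (hk' ▸ (dyadicFloor_le _ ht.1).trans ht.2)

lemma DyadicIncrementsLE.abs_sub_dyadicFloor_le_sum (hinc : DyadicIncrementsLE f T j₀ c)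
    (hc : 0 ≤ c) {t : ℝ} (ht : t ∈ Set.Icc 0 T) (n : ℕ) :
    |f (dyadicFloor (j₀ + n) t) - f (dyadicFloor j₀ t)| ≤ ∑ i ∈ range n, c (i + 1) := by
  induction n with
  | zero => simp
  | succ n ih =>
    rw [sum_range_succ]
    have hstep := hinc.abs_sub_dyadicFloor_succ_le hc ht n
    have htri := abs_sub_le (f (dyadicFloor (j₀ + (n + 1)) t)) (f (dyadicFloor (j₀ + n) t))
      (f (dyadicFloor j₀ t))
    linarith

lemma DyadicIncrementsLE.abs_sub_dyadicFloor_le (hinc : DyadicIncrementsLE f T j₀ c)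
    (hc : 0 ≤ c) {S : ℝ} (hS : ∀ n, ∑ i ∈ range n, c (i + 1) ≤ S) {t : ℝ}
    (ht : t ∈ Set.Icc 0 T) (hf : ContinuousWithinAt f (Set.Ici 0) t) :
    |f t - f (dyadicFloor j₀ t)| ≤ S := by
  have hlim : Tendsto (fun n ↦ f (dyadicFloor (j₀ + n) t)) atTop (𝓝 (f t)) :=
    hf.tendsto.comp ((tendsto_dyadicFloor ht.1).comp
      (tendsto_atTop_mono (Nat.le_add_left · j₀) tendsto_id))
  exact le_of_tendsto' (hlim.sub_const _).abs
    fun n ↦ (hinc.abs_sub_dyadicFloor_le_sum hc ht n).trans (hS n)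

lemma DyadicIncrementsLE.abs_sub_apply_le (hinc : DyadicIncrementsLE f T j₀ c)
    (hc : 0 ≤ c) {S : ℝ} (hS : ∀ n, ∑ i ∈ range n, c (i + 1) ≤ S)
    (hf : ContinuousOn f (Set.Ici 0)) {s t : ℝ} (hs : s ∈ Set.Icc 0 T) (ht : t ∈ Set.Icc 0 T)
    (hst : |t - s| ≤ (2 ^ j₀)⁻¹) :
    |f t - f s| ≤ 2 * S + c 0 := by
  wlog hle : s ≤ t generalizing s t
  · rw [abs_sub_comm]; exact this ht hs (abs_sub_comm s t ▸ hst) (le_of_not_ge hle)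
  have hpow : (0 : ℝ) < 2 ^ j₀ := by positivity
  set p := ⌊2 ^ j₀ * s⌋₊
  have hmid : |f (dyadicFloor j₀ t) - f (dyadicFloor j₀ s)| ≤ c 0 := by
    have hpq : p ≤ ⌊2 ^ j₀ * t⌋₊ := Nat.floor_le_floor (by gcongr)
    have hqp : ⌊2 ^ j₀ * t⌋₊ < p + 2 := by
      rw [Nat.floor_lt (by have := ht.1; positivity)]
      have : 2 ^ j₀ * t ≤ 2 ^ j₀ * s + 1 := by
        have hts : 2 ^ j₀ * (t - s) ≤ 1 :=
          calc 2 ^ j₀ * (t - s) ≤ 2 ^ j₀ * (2 ^ j₀)⁻¹ := by gcongr; exact (abs_le.1 hst).2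
            _ = 1 := mul_inv_cancel₀ hpow.ne'
        linarith
      push_cast; linarith [Nat.lt_floor_add_one (2 ^ j₀ * s)]
    rcases (by omega : ⌊2 ^ j₀ * t⌋₊ = p ∨ ⌊2 ^ j₀ * t⌋₊ = p + 1) with h | h
    · rw [dyadicFloor, dyadicFloor, h, sub_self, abs_zero]; exact hc 0
    · have htp : dyadicFloor j₀ t = ((p : ℝ) + 1) / 2 ^ (j₀ + 0) := by
        rw [dyadicFloor, h]; push_cast; rfl
      rw [htp]
      exact hinc 0 p (htp ▸ (dyadicFloor_le _ ht.1).trans ht.2)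
  calc |f t - f s| ≤ |f t - f (dyadicFloor j₀ t)| + |f (dyadicFloor j₀ t) - f (dyadicFloor j₀ s)|
        + |f s - f (dyadicFloor j₀ s)| := by
          rw [abs_sub_comm (f s)]
          exact (_root_.abs_sub_le _ _ _).trans (by gcongr; exact _root_.abs_sub_le _ _ _)
    _ ≤ S + c 0 + S := by
      gcongr
      · exact hinc.abs_sub_dyadicFloor_le hc hS ht (hf t ht.1)
      · exact hinc.abs_sub_dyadicFloor_le hc hS hs (hf s hs.1)
    _ = 2 * S + c 0 := by ring

end Chaining

def HasGaussianIncrements {Ω : Type*} [MeasurableSpace Ω] (P : Measure Ω) (β : ℝ → Ω → ℝ) :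
    Prop :=
  ∀ s t : ℝ, 0 ≤ s → s ≤ t → P.map (fun ω ↦ β t ω - β s ω) = gaussianReal 0 (t - s).toNNReal

section Increments

variable {Ω : Type*} [MeasurableSpace Ω] {P : Measure Ω} [IsProbabilityMeasure P]
  {β : ℝ → Ω → ℝ}

lemma measure_abs_sub_ge_le (hmeas : ∀ t, Measurable (β t))
    (hgauss : HasGaussianIncrements P β)
    {s t : ℝ} (hs : 0 ≤ s) (hst : s < t) {ε : ℝ} (hε : 0 < ε) :
    P {ω | ε ≤ |β t ω - β s ω|} ≤ ENNReal.ofReal (16 * (t - s) ^ 2 / ε ^ 4) := by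
  have h := measure_abs_ge_le_of_map_eq_gaussianReal ((hmeas t).sub (hmeas s))
    (Real.toNNReal_pos.2 (sub_pos.2 hst)) (hgauss s t hs hst.le) hε
  rwa [Real.coe_toNNReal _ (sub_pos.2 hst).le] at h

lemma measure_exists_dyadic_increment_ge_le (hmeas : ∀ t, Measurable (β t))
    (hgauss : HasGaussianIncrements P β)
    (T : ℝ) (j : ℕ) {ε : ℝ} (hε : 0 < ε) :
    P {ω | ∃ k : ℕ, ((k : ℝ) + 1) / 2 ^ j ≤ T ∧
        ε ≤ |β (((k : ℝ) + 1) / 2 ^ j) ω - β (k / 2 ^ j) ω|}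
      ≤ ENNReal.ofReal (16 * ⌈T⌉₊ / (2 ^ j * ε ^ 4)) := by
  have hpow : (0 : ℝ) < 2 ^ j := by positivity
  have hsub : {ω | ∃ k : ℕ, ((k : ℝ) + 1) / 2 ^ j ≤ T ∧
        ε ≤ |β (((k : ℝ) + 1) / 2 ^ j) ω - β (k / 2 ^ j) ω|}
      ⊆ ⋃ k ∈ range (⌈T⌉₊ * 2 ^ j), {ω | ε ≤ |β (((k : ℝ) + 1) / 2 ^ j) ω - β (k / 2 ^ j) ω|} := by
    rintro ω ⟨k, hkT, hk⟩
    refine Set.mem_biUnion (mem_range.2 ?_) hk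
    have : (k : ℝ) + 1 ≤ ⌈T⌉₊ * 2 ^ j :=
      (div_le_iff₀ hpow).1 hkT |>.trans (by gcongr; exact Nat.le_ceil T)
    exact_mod_cast (lt_add_one (k : ℝ)).trans_le this
  have hterm : ∀ k : ℕ, P {ω | ε ≤ |β (((k : ℝ) + 1) / 2 ^ j) ω - β (k / 2 ^ j) ω|}
      ≤ ENNReal.ofReal (16 * ((2 : ℝ) ^ j)⁻¹ ^ 2 / ε ^ 4) := by
    intro k
    have hgap : ((k : ℝ) + 1) / 2 ^ j - k / 2 ^ j = (2 ^ j)⁻¹ := by field_simp; ring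
    have h := measure_abs_sub_ge_le hmeas hgauss (by positivity)
      (show (k : ℝ) / 2 ^ j < ((k : ℝ) + 1) / 2 ^ j by gcongr; linarith) hε
    rwa [hgap] at h
  calc _ ≤ ∑ k ∈ range (⌈T⌉₊ * 2 ^ j),
        P {ω | ε ≤ |β (((k : ℝ) + 1) / 2 ^ j) ω - β (k / 2 ^ j) ω|} :=
        (measure_mono hsub).trans (measure_biUnion_finset_le _ _)
    _ ≤ ∑ k ∈ range (⌈T⌉₊ * 2 ^ j), ENNReal.ofReal (16 * ((2 : ℝ) ^ j)⁻¹ ^ 2 / ε ^ 4) :=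
        sum_le_sum fun k _ ↦ hterm k
    _ = ENNReal.ofReal (16 * ⌈T⌉₊ / (2 ^ j * ε ^ 4)) := by
        rw [sum_const, card_range, nsmul_eq_mul, ← ENNReal.ofReal_natCast,
          ← ENNReal.ofReal_mul (by positivity)]
        congr 1
        push_cast
        field_simp

lemma measure_not_dyadicIncrementsLE_le (hmeas : ∀ t, Measurable (β t))
    (hgauss : HasGaussianIncrements P β)
    (T : ℝ) (j₀ : ℕ) {a : ℝ} (ha : 0 < a) :
    P {ω | ¬ DyadicIncrementsLE (β · ω) T j₀ (fun i ↦ a * (9 / 10) ^ i)}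
      ≤ ENNReal.ofReal (80 * ⌈T⌉₊ / (2 ^ j₀ * a ^ 4)) := by
  set K : ℝ := 16 * ⌈T⌉₊ / (2 ^ j₀ * a ^ 4)
  set r : ℝ := (9 / 10 : ℝ)⁻¹ ^ 4 / 2
  have hsub : {ω | ¬ DyadicIncrementsLE (β · ω) T j₀ (fun i ↦ a * (9 / 10) ^ i)}
      ⊆ ⋃ i : ℕ, {ω | ∃ k : ℕ, ((k : ℝ) + 1) / 2 ^ (j₀ + i) ≤ T ∧
        a * (9 / 10) ^ i ≤ |β (((k : ℝ) + 1) / 2 ^ (j₀ + i)) ω - β (k / 2 ^ (j₀ + i)) ω|} := by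
    intro ω hω
    simp only [DyadicIncrementsLE, not_forall, not_le] at hω
    obtain ⟨i, k, hkT, hk⟩ := hω
    exact Set.mem_iUnion.2 ⟨i, k, hkT, hk.le⟩
  have hlevel : ∀ i : ℕ, 16 * ⌈T⌉₊ / (2 ^ (j₀ + i) * (a * (9 / 10) ^ i) ^ 4) = K * r ^ i := by
    intro i
    simp only [K, r, pow_add, div_pow, inv_pow, ← pow_mul, mul_pow]
    ring
  calc _ ≤ ∑' i : ℕ, ENNReal.ofReal (K * r ^ i) := by
        refine (measure_mono hsub).trans
          ((measure_iUnion_le _).trans (ENNReal.tsum_le_tsum fun i ↦ ?_))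
        rw [← hlevel]
        exact measure_exists_dyadic_increment_ge_le hmeas hgauss T (j₀ + i) (by positivity)
    _ = ENNReal.ofReal (K * (1 - r)⁻¹) := by
        rw [← ENNReal.ofReal_tsum_of_nonneg (fun i ↦ by positivity)
          ((summable_geometric_of_lt_one (by norm_num) (by norm_num)).mul_left K),
          tsum_mul_left, tsum_geometric_of_lt_one (by norm_num) (by norm_num)]
    _ ≤ ENNReal.ofReal (80 * ⌈T⌉₊ / (2 ^ j₀ * a ^ 4)) := by
        refine ENNReal.ofReal_le_ofReal ?_
        rw [show (80 : ℝ) * ⌈T⌉₊ / (2 ^ j₀ * a ^ 4) = K * 5 by simp only [K]; ring]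
        gcongr
        norm_num

end Increments

lemma mul_abs_sub_le_of_dyadicIncrementsLE {f : ℝ → ℝ} (hf : ContinuousOn f (Set.Ici 0))
    {T L : ℝ} (hL : 0 ≤ L) {m : ℕ} (hm : 0 < m)
    (hinc : DyadicIncrementsLE f T (Nat.log 2 (m ^ 6)) (fun i ↦ L / (19 * m) * (9 / 10) ^ i))
    {t₁ t₂ : ℝ} (h₁ : t₁ ∈ Set.Icc 0 T) (h₂ : t₂ ∈ Set.Icc 0 T)
    (h₁₂ : |t₁ - t₂| ≤ ((m : ℝ) ^ 6)⁻¹) :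
    m * |f t₁ - f t₂| ≤ L := by
  set a := L / (19 * m)
  have hm' : (0 : ℝ) < m := Nat.cast_pos.2 hm
  have hc : 0 ≤ fun i : ℕ ↦ a * (9 / 10 : ℝ) ^ i := fun i ↦ by positivity
  have hS : ∀ n, ∑ i ∈ range n, a * (9 / 10 : ℝ) ^ (i + 1) ≤ 9 * a := fun n ↦
    calc ∑ i ∈ range n, a * (9 / 10 : ℝ) ^ (i + 1)
        = a * (9 / 10) * ∑ i ∈ range n, (9 / 10 : ℝ) ^ i := by
          rw [mul_sum]; exact sum_congr rfl fun i _ ↦ by ring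
      _ ≤ a * (9 / 10) * ((9 / 10) ^ 0 / (1 - 9 / 10)) := by
          rw [range_eq_Ico]; gcongr; exact geom_sum_Ico_le_of_lt_one (by norm_num) (by norm_num)
      _ = 9 * a := by norm_num; ring
  have hgap : |t₁ - t₂| ≤ ((2 : ℝ) ^ Nat.log 2 (m ^ 6))⁻¹ := by
    refine h₁₂.trans (inv_anti₀ (by positivity) ?_)
    exact_mod_cast Nat.pow_log_le_self 2 (pow_ne_zero 6 hm.ne')
  calc (m : ℝ) * |f t₁ - f t₂| ≤ m * (2 * (9 * a) + a * (9 / 10) ^ 0) := by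
        gcongr; exact hinc.abs_sub_apply_le hc hS hf h₂ h₁ hgap
    _ = L := by simp only [a]; field_simp; ring

lemma inv_two_pow_log_le {n : ℕ} (hn : 0 < n) : ((2 : ℝ) ^ Nat.log 2 n)⁻¹ ≤ 2 / n := by
  have h : (n : ℝ) < 2 * 2 ^ Nat.log 2 n := by
    exact_mod_cast (Nat.lt_pow_succ_log_self one_lt_two n).trans_eq (pow_succ' 2 _)
  rw [inv_le_comm₀ (by positivity) (by positivity), inv_div, div_le_iff₀ two_pos]
  linarith

lemma measure_not_dyadicIncrementsLE_log_le {Ω : Type*} [MeasurableSpace Ω] {P : Measure Ω}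
    [IsProbabilityMeasure P] {β : ℝ → Ω → ℝ} (hmeas : ∀ t, Measurable (β t))
    (hgauss : HasGaussianIncrements P β)
    (T : ℝ) {L : ℝ} (hL : 0 < L) {m : ℕ} (hm : 0 < m) :
    P {ω | ¬ DyadicIncrementsLE (β · ω) T (Nat.log 2 (m ^ 6)) (fun i ↦ L / (19 * m) * (9 / 10) ^ i)}
      ≤ ENNReal.ofReal (160 * 19 ^ 4 * ⌈T⌉₊ / L ^ 4 * ((m : ℝ) ^ 2)⁻¹) := by
  have hm' : (0 : ℝ) < m := Nat.cast_pos.2 hm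
  refine (measure_not_dyadicIncrementsLE_le hmeas hgauss T _ (by positivity)).trans
    (ENNReal.ofReal_le_ofReal ?_)
  have h := inv_two_pow_log_le (pow_pos hm 6)
  push_cast at h
  calc 80 * (⌈T⌉₊ : ℝ) / (2 ^ Nat.log 2 (m ^ 6) * (L / (19 * m)) ^ 4)
      = 80 * 19 ^ 4 * ⌈T⌉₊ * m ^ 4 / L ^ 4 * (2 ^ Nat.log 2 (m ^ 6))⁻¹ := by
        field_simp
    _ ≤ 80 * 19 ^ 4 * ⌈T⌉₊ * m ^ 4 / L ^ 4 * (2 / m ^ 6) := by gcongr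
    _ = 160 * 19 ^ 4 * ⌈T⌉₊ / L ^ 4 * ((m : ℝ) ^ 2)⁻¹ := by field_simp; ring

lemma hasSum_inv_succ_sq : HasSum (fun m : ℕ ↦ (((m + 1 : ℕ) : ℝ) ^ 2)⁻¹) (π ^ 2 / 6) := by
  simpa using (hasSum_nat_add_iff' 1).2 hasSum_zeta_two

/-- For a standard Brownian motion `β` and `T > 0`, there is a constant `C`
depending only on `T` such that for every `L > 0`,
`P(∃ m ≥ 1, sup_{t₁,t₂ ∈ [0,T], |t₁−t₂| ≤ m⁻⁶} m·|β_{t₁} − β_{t₂}| > L) ≤ C / L⁴`. -/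
theorem stmt_6 {Ω : Type*} [MeasurableSpace Ω] (P : Measure Ω) [IsProbabilityMeasure P]
    (β : ℝ → Ω → ℝ) (hβ : IsBrownianMotion P β) (T : ℝ) (hT : 0 < T) :
    ∃ C : ℝ, 0 < C ∧ ∀ L : ℝ, 0 < L →
      P {ω | ∃ m : ℕ, 1 ≤ m ∧ ∃ t₁ ∈ Set.Icc (0:ℝ) T, ∃ t₂ ∈ Set.Icc (0:ℝ) T,
            |t₁ - t₂| ≤ (((m : ℝ)) ^ 6)⁻¹ ∧ L < (m : ℝ) * |β t₁ ω - β t₂ ω|}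
        ≤ ENNReal.ofReal (C / L ^ 4) := by
  obtain ⟨hmeas, -, hcont, -, hgauss⟩ := hβ
  set K : ℝ := 160 * 19 ^ 4 * ⌈T⌉₊
  have hK : 0 < K := by have := Nat.ceil_pos.2 hT; positivity
  refine ⟨2 * K, by positivity, fun L hL ↦ ?_⟩
  set bad : ℕ → Set Ω := fun m ↦ {ω | ¬ DyadicIncrementsLE (β · ω) T (Nat.log 2 (m ^ 6))
    (fun i ↦ L / (19 * m) * (9 / 10) ^ i)}
  calc _ ≤ P (⋃ m : ℕ, bad (m + 1)) := measure_mono_ae <| by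
        filter_upwards [hcont] with ω hω ⟨m, hm, t₁, h₁, t₂, h₂, h₁₂, hlt⟩
        obtain ⟨n, rfl⟩ : ∃ n, m = n + 1 := ⟨m - 1, by omega⟩
        exact Set.mem_iUnion.2 ⟨n, fun hinc ↦ hlt.not_ge
          (mul_abs_sub_le_of_dyadicIncrementsLE hω hL.le n.succ_pos hinc h₁ h₂ h₁₂)⟩
    _ ≤ ∑' m : ℕ, P (bad (m + 1)) := measure_iUnion_le _
    _ ≤ ∑' m : ℕ, ENNReal.ofReal (K / L ^ 4 * (((m + 1 : ℕ) : ℝ) ^ 2)⁻¹) :=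
        ENNReal.tsum_le_tsum fun m ↦
          measure_not_dyadicIncrementsLE_log_le hmeas hgauss T hL m.succ_pos
    _ = ENNReal.ofReal (K / L ^ 4 * (π ^ 2 / 6)) := by
        rw [← ENNReal.ofReal_tsum_of_nonneg (fun m ↦ by positivity)
          (hasSum_inv_succ_sq.summable.mul_left _), tsum_mul_left, hasSum_inv_succ_sq.tsum_eq]
    _ ≤ ENNReal.ofReal (2 * K / L ^ 4) := by
        refine ENNReal.ofReal_le_ofReal ?_
        rw [show 2 * K / L ^ 4 = K / L ^ 4 * 2 by ring]
        gcongr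
        nlinarith [pi_lt_d2, pi_pos]
end
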